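/- Let s, t ∈ S with st of order 3 in a Coxeter group W̃. Define D_L(s,t) = {w : exactly one of s,t lies in L(w)}. Then for every w ∈ D_L(s,t), exactly one of the two elements sw, tw lies in D_L(s,t), and the resulting map w ↦ *w is an involution of D_L(s,t). -/

import Mathlib

namespace StarAux

open Classical in
/-- Conjugation by `x` with a sign flip at `x` itself. -/
noncomputable def eta {W : Type*} [Group W] (x : W) : Equiv.Perm (W × ℤˣ) where
  toFun q := (x * q.1 * x⁻¹, if q.1 = x then -q.2 else q.2)
  invFun q := (x⁻¹ * q.1 * x, if q.1 = x then -q.2 else q.2)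
  left_inv q := by
    obtain ⟨a, ε⟩ := q
    by_cases h : a = x
    · subst h; simp
    · have h2 : x * a * x⁻¹ ≠ x := by
        intro hc
        apply h
        have := congrArg (fun z => x⁻¹ * z * x) hc
        simpa [mul_assoc] using this
      refine Prod.ext ?_ ?_
      · show x⁻¹ * (x * a * x⁻¹) * x = a
        group
      · show (if x * a * x⁻¹ = x then -(if a = x then -ε else ε) else (if a = x then -ε else ε)) = ε
        rw [if_neg h2, if_neg h]
  right_inv q := by
    obtain ⟨a, ε⟩ := q
    by_cases h : a = x
    · subst h; simp
    · have h2 : x⁻¹ * a * x ≠ x := by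
        intro hc
        apply h
        have := congrArg (fun z => x * z * x⁻¹) hc
        simpa [mul_assoc] using this
      refine Prod.ext ?_ ?_
      · show x * (x⁻¹ * a * x) * x⁻¹ = a
        group
      · show (if x⁻¹ * a * x = x then -(if a = x then -ε else ε) else (if a = x then -ε else ε)) = ε
        rw [if_neg h2, if_neg h]

open Classical in
theorem eta_apply {W : Type*} [Group W] (x : W) (a : W) (ε : ℤˣ) :
    eta x (a, ε) = (x * a * x⁻¹, if a = x then -ε else ε) := rfl

theorem conj_eq_iff {W : Type*} [Group W] (g c t : W) :
    g * t * g⁻¹ = c ↔ t = g⁻¹ * c * g := by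
  constructor
  · intro h; rw [← h]; group
  · intro h; rw [h]; group

private theorem units_comm (a b P ε : ℤˣ) : a * b * (P * ε) = P * a * b * ε := by
  rw [← mul_assoc, mul_comm (a * b) P, ← mul_assoc]

open Classical in
theorem eta_pow_eq_one {W : Type*} [Group W] (si sj p : W) (hp : p = si * sj)
    (hsi1 : si * si = 1) (hsj1 : sj * sj = 1) (m : ℕ) (hpm : p ^ m = 1) :
    (eta si * eta sj) ^ m = 1 := by
  have hsiv : si⁻¹ = si := inv_eq_of_mul_eq_one_left hsi1
  have hsjv : sj⁻¹ = sj := inv_eq_of_mul_eq_one_left hsj1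
  have hpinv : p⁻¹ = sj * si := by rw [hp, mul_inv_rev, hsiv, hsjv]
  have hsj : ∀ n : ℕ, sj * p ^ n = (p ^ n)⁻¹ * sj := by
    intro n
    induction n with
    | zero => simp
    | succ n ih =>
      have h1 : sj * p = p⁻¹ * sj := by rw [hpinv, hp, mul_assoc]
      rw [pow_succ', ← mul_assoc, h1, mul_assoc, ih, ← mul_assoc, ← mul_inv_rev, ← pow_succ,
        ← pow_succ']
  have E1 : ∀ k : ℕ, (p^k)⁻¹ * sj * p^k = (p^(2*k))⁻¹ * sj := by
    intro k
    rw [mul_assoc, hsj k, ← mul_assoc, ← mul_inv_rev, ← pow_add, two_mul]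
  have E2 : ∀ k : ℕ, (p^k)⁻¹ * (sj⁻¹ * si * sj) * p^k = (p^(2*k+1))⁻¹ * sj := by
    intro k
    have hx : sj⁻¹ * si * sj = p⁻¹ * sj := by rw [hsjv, hpinv]
    rw [hx]
    calc (p^k)⁻¹ * (p⁻¹ * sj) * p^k
        = (p^k)⁻¹ * p⁻¹ * (sj * p^k) := by group
      _ = (p^k)⁻¹ * p⁻¹ * ((p^k)⁻¹ * sj) := by rw [hsj k]
      _ = ((p^k)⁻¹ * p⁻¹ * (p^k)⁻¹) * sj := by rw [← mul_assoc]
      _ = (p^(2*k+1))⁻¹ * sj := by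
          have hkk : k + (k+1) = 2*k+1 := by omega
          rw [← mul_inv_rev, ← mul_inv_rev, ← pow_succ', ← pow_add, hkk]
  have step : ∀ (y : W) (δ : ℤˣ), (eta si * eta sj) (y, δ) =
      (p * y * p⁻¹,
        (if y = sj then (-1:ℤˣ) else 1) * (if sj * y * sj⁻¹ = si then (-1:ℤˣ) else 1) * δ) := by
    intro y δ
    rw [Equiv.Perm.mul_apply, eta_apply, eta_apply]
    refine Prod.ext ?_ ?_
    · show si * (sj * y * sj⁻¹) * si⁻¹ = p * y * p⁻¹
      rw [hp, mul_inv_rev]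
      group
    · show (if sj * y * sj⁻¹ = si then -(if y = sj then -δ else δ) else (if y = sj then -δ else δ))
        = (if y = sj then (-1:ℤˣ) else 1) * (if sj * y * sj⁻¹ = si then (-1:ℤˣ) else 1) * δ
      by_cases c1 : y = sj <;> by_cases c2 : sj * y * sj⁻¹ = si
      · rw [if_pos c2, if_pos c1, if_pos c1, if_pos c2]; simp
      · rw [if_neg c2, if_pos c1, if_pos c1, if_neg c2]; simp
      · rw [if_pos c2, if_neg c1, if_neg c1, if_pos c2]; simp
      · rw [if_neg c2, if_neg c1, if_neg c1, if_neg c2]; simp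
  have H : ∀ (k : ℕ) (t : W) (ε : ℤˣ),
      ((eta si * eta sj) ^ k) (t, ε) =
        (p^k * t * (p^k)⁻¹,
          (∏ x ∈ Finset.range (2*k), if t = (p^x)⁻¹ * sj then (-1 : ℤˣ) else 1) * ε) := by
    intro k
    induction k with
    | zero => intro t ε; simp
    | succ k ih =>
      intro t ε
      rw [pow_succ', Equiv.Perm.mul_apply, ih, step]
      have hc1' : (p^k * t * (p^k)⁻¹ = sj) = (t = (p^(2*k))⁻¹ * sj) :=
        propext ((conj_eq_iff (p^k) sj t).trans (by rw [E1 k]))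
      have hc2' : (sj * (p^k * t * (p^k)⁻¹) * sj⁻¹ = si) = (t = (p^(2*k+1))⁻¹ * sj) :=
        propext ((conj_eq_iff sj si _).trans
          ((conj_eq_iff (p^k) (sj⁻¹ * si * sj) t).trans (by rw [E2 k])))
      refine Prod.ext ?_ ?_
      · show p * (p^k * t * (p^k)⁻¹) * p⁻¹ = p^(k+1) * t * (p^(k+1))⁻¹
        rw [pow_succ' p k]
        group
      · show (if p^k * t * (p^k)⁻¹ = sj then (-1:ℤˣ) else 1)
            * (if sj * (p^k * t * (p^k)⁻¹) * sj⁻¹ = si then (-1:ℤˣ) else 1)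
            * ((∏ x ∈ Finset.range (2*k), if t = (p^x)⁻¹ * sj then (-1 : ℤˣ) else 1) * ε)
          = (∏ x ∈ Finset.range (2*(k+1)), if t = (p^x)⁻¹ * sj then (-1 : ℤˣ) else 1) * ε
        rw [show 2*(k+1) = 2*k+1+1 from by omega, Finset.prod_range_succ, Finset.prod_range_succ,
          hc1', hc2']
        exact units_comm _ _ _ _
  refine Equiv.ext ?_
  rintro ⟨t, ε⟩
  rw [H m t ε]
  refine Prod.ext ?_ ?_
  · show p^m * t * (p^m)⁻¹ = ((1 : Equiv.Perm (W × ℤˣ)) (t, ε)).1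
    rw [hpm]
    simp
  · show (∏ x ∈ Finset.range (2*m), if t = (p^x)⁻¹ * sj then (-1 : ℤˣ) else 1) * ε
        = ((1 : Equiv.Perm (W × ℤˣ)) (t, ε)).2
    rw [two_mul, Finset.prod_range_add]
    have hper : ∀ x ∈ Finset.range m, (if t = (p^(m+x))⁻¹ * sj then (-1 : ℤˣ) else 1)
        = (if t = (p^x)⁻¹ * sj then (-1 : ℤˣ) else 1) := by
      intro x _
      rw [pow_add, hpm, one_mul]
    rw [Finset.prod_congr rfl hper, Int.units_mul_self, one_mul]
    simp

variable {B W : Type*} [Group W] {M : CoxeterMatrix B} (cs : CoxeterSystem M W)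

theorem eta_liftable : M.IsLiftable (fun i => eta (cs.simple i)) :=
  fun i j => eta_pow_eq_one (cs.simple i) (cs.simple j) _ rfl
    (cs.simple_mul_simple_self i) (cs.simple_mul_simple_self j) (M i j)
    (cs.simple_mul_simple_pow i j)

noncomputable def rep : W →* Equiv.Perm (W × ℤˣ) :=
  cs.lift ⟨fun i => eta (cs.simple i), eta_liftable cs⟩

theorem rep_simple (i : B) : rep cs (cs.simple i) = eta (cs.simple i) :=
  cs.lift_apply_simple (eta_liftable cs) i

open Classical in
theorem rep_wordProd_inv (ω : List B) : ∀ (t : W) (ε : ℤˣ),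
    rep cs (cs.wordProd ω)⁻¹ (t, ε) =
      ((cs.wordProd ω)⁻¹ * t * cs.wordProd ω,
        ((cs.leftInvSeq ω).map (fun u => if u = t then (-1:ℤˣ) else 1)).prod * ε) := by
  induction ω with
  | nil => intro t ε; simp
  | cons i α ih =>
    intro t ε
    have h1 : (cs.wordProd (i :: α))⁻¹ = (cs.wordProd α)⁻¹ * cs.simple i := by
      rw [cs.wordProd_cons, mul_inv_rev, cs.inv_simple]
    rw [h1, map_mul, Equiv.Perm.mul_apply, rep_simple, eta_apply, ih]
    refine Prod.ext ?_ ?_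
    · show (cs.wordProd α)⁻¹ * (cs.simple i * t * (cs.simple i)⁻¹) * cs.wordProd α
        = ((cs.wordProd α)⁻¹ * cs.simple i) * t * cs.wordProd (i :: α)
      rw [cs.wordProd_cons, cs.inv_simple]
      group
    · show ((cs.leftInvSeq α).map
          (fun u => if u = cs.simple i * t * (cs.simple i)⁻¹ then (-1:ℤˣ) else 1)).prod
          * (if t = cs.simple i then -ε else ε)
        = ((cs.leftInvSeq (i :: α)).map (fun u => if u = t then (-1:ℤˣ) else 1)).prod * ε
      rw [show cs.leftInvSeq (i :: α)
            = cs.simple i :: List.map (MulAut.conj (cs.simple i)) (cs.leftInvSeq α) from rfl]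
      rw [List.map_cons, List.prod_cons, List.map_map]
      have hfun : ((fun u => if u = t then (-1:ℤˣ) else 1) ∘ ⇑(MulAut.conj (cs.simple i)))
          = (fun u => if u = cs.simple i * t * (cs.simple i)⁻¹ then (-1:ℤˣ) else 1) := by
        funext u
        show (if (MulAut.conj (cs.simple i)) u = t then (-1:ℤˣ) else 1) = _
        have heq : ((MulAut.conj (cs.simple i)) u = t)
            = (u = cs.simple i * t * (cs.simple i)⁻¹) := by
          rw [MulAut.conj_apply]
          apply propext
          refine (conj_eq_iff _ _ _).trans ?_
          rw [cs.inv_simple]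
        rw [heq]
      rw [hfun]
      by_cases hts : t = cs.simple i
      · rw [if_pos hts, if_pos hts.symm]
        rw [mul_neg, neg_mul, neg_mul, one_mul]
      · rw [if_neg hts, if_neg (fun e => hts e.symm)]
        rw [one_mul]

open Classical in
theorem lis_sign_invariant (ω₁ ω₂ : List B) (h : cs.wordProd ω₁ = cs.wordProd ω₂) (t : W) :
    ((cs.leftInvSeq ω₁).map (fun u => if u = t then (-1:ℤˣ) else 1)).prod
      = ((cs.leftInvSeq ω₂).map (fun u => if u = t then (-1:ℤˣ) else 1)).prod := by
  have h1 := rep_wordProd_inv cs ω₁ t 1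
  have h2 := rep_wordProd_inv cs ω₂ t 1
  rw [h] at h1
  have h3 := congrArg Prod.snd (h1.symm.trans h2)
  simpa using h3

open Classical in
theorem mem_of_prod_ne_one (l : List W) (t : W)
    (h : (l.map (fun u => if u = t then (-1:ℤˣ) else 1)).prod ≠ 1) : t ∈ l := by
  by_contra hmem
  apply h
  apply List.prod_eq_one
  intro x hx
  rw [List.mem_map] at hx
  obtain ⟨u, hu, rfl⟩ := hx
  have hne : u ≠ t := fun e => hmem (e ▸ hu)
  rw [if_neg hne]

open Classical in
theorem simple_mem_leftInvSeq (ω : List B) (hred : cs.IsReduced ω) (i : B)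
    (h : cs.IsLeftDescent (cs.wordProd ω) i) : cs.simple i ∈ cs.leftInvSeq ω := by
  obtain ⟨α, hlen, hα⟩ := cs.exists_reduced_word (cs.simple i * cs.wordProd ω)
  have hαred : cs.IsReduced α := by
    unfold CoxeterSystem.IsReduced
    exact hlen
  have hπ : cs.wordProd (i :: α) = cs.wordProd ω := by
    rw [cs.wordProd_cons, ← hα]
    exact cs.simple_mul_simple_cancel_left i
  have hinv := lis_sign_invariant cs ω (i :: α) hπ.symm (cs.simple i)
  have hnot : cs.simple i ∉ cs.leftInvSeq α := by
    intro hmem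
    have hx := (cs.isLeftInversion_of_mem_leftInvSeq hαred hmem).2
    rw [← hα, cs.simple_mul_simple_cancel_left] at hx
    unfold CoxeterSystem.IsLeftDescent at h
    omega
  have hprod : ((cs.leftInvSeq (i :: α)).map
      (fun u => if u = cs.simple i then (-1:ℤˣ) else 1)).prod = -1 := by
    rw [show cs.leftInvSeq (i :: α)
          = cs.simple i :: List.map (MulAut.conj (cs.simple i)) (cs.leftInvSeq α) from rfl]
    rw [List.map_cons, List.prod_cons, if_pos rfl]
    have hone : ((List.map (⇑(MulAut.conj (cs.simple i))) (cs.leftInvSeq α)).map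
        (fun u => if u = cs.simple i then (-1:ℤˣ) else 1)).prod = 1 := by
      apply List.prod_eq_one
      intro x hx
      rw [List.mem_map] at hx
      obtain ⟨u, hu, rfl⟩ := hx
      rw [if_neg]
      intro e
      subst e
      rw [List.mem_map] at hu
      obtain ⟨v, hv, hv2⟩ := hu
      apply hnot
      rw [MulAut.conj_apply] at hv2
      have h5 := (conj_eq_iff _ _ _).mp hv2
      rw [inv_mul_cancel, one_mul] at h5
      exact h5 ▸ hv
    rw [hone, mul_one]
  rw [hprod] at hinv
  exact mem_of_prod_ne_one _ _ (by rw [hinv]; decide)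

theorem exchange (ω : List B) (hred : cs.IsReduced ω) (i : B)
    (h : cs.IsLeftDescent (cs.wordProd ω) i) :
    ∃ k, k < ω.length ∧ cs.simple i * cs.wordProd ω = cs.wordProd (ω.eraseIdx k) := by
  have hmem := simple_mem_leftInvSeq cs ω hred i h
  rw [List.mem_iff_getElem] at hmem
  obtain ⟨k, hk, hget⟩ := hmem
  have hk' : k < ω.length := by simpa using hk
  refine ⟨k, hk', ?_⟩
  have h2 : (cs.leftInvSeq ω).getD k 1 = cs.simple i := by
    rw [List.getD_eq_getElem _ _ hk, hget]
  rw [← h2]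
  exact cs.getD_leftInvSeq_mul_wordProd ω k

theorem braid_of_three (i j : B) (h3 : M i j = 3) :
    cs.simple i * cs.simple j * cs.simple i = cs.simple j * cs.simple i * cs.simple j := by
  have h := cs.simple_mul_simple_pow i j
  rw [h3, show (3:ℕ) = 2+1 from rfl, pow_succ, sq] at h
  have hinv : (cs.simple j * cs.simple i * cs.simple j)⁻¹
      = cs.simple j * cs.simple i * cs.simple j := by
    rw [mul_inv_rev, mul_inv_rev, cs.inv_simple, cs.inv_simple, ← mul_assoc]
  have h9 : (cs.simple i * cs.simple j * cs.simple i)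
      * (cs.simple j * cs.simple i * cs.simple j) = 1 := by
    calc (cs.simple i * cs.simple j * cs.simple i) * (cs.simple j * cs.simple i * cs.simple j)
        = ((cs.simple i * cs.simple j) * (cs.simple i * cs.simple j)) * (cs.simple i * cs.simple j) := by
          group
      _ = 1 := h
  exact (mul_eq_one_iff_eq_inv.mp h9).trans hinv

theorem key_forward {i j : B}
    (hbraid : cs.simple i * cs.simple j * cs.simple i = cs.simple j * cs.simple i * cs.simple j)
    {w : W} (hi : cs.IsLeftDescent w i) (hj : ¬ cs.IsLeftDescent w j)
    (h : cs.IsLeftDescent (cs.simple i * w) j) : cs.IsLeftDescent (cs.simple j * w) i := by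
  have h1 := cs.isLeftDescent_iff.mp hi
  have h2 := cs.not_isLeftDescent_iff.mp hj
  have h3 := cs.isLeftDescent_iff.mp h
  have hv : cs.simple i * (cs.simple j * w) =
      cs.simple j * (cs.simple i * (cs.simple j * (cs.simple i * w))) := by
    have e : (cs.simple j * cs.simple i * cs.simple j) * cs.simple i
        = cs.simple i * cs.simple j := by
      rw [← hbraid]
      exact cs.simple_mul_simple_cancel_right i
    calc cs.simple i * (cs.simple j * w)
        = ((cs.simple j * cs.simple i * cs.simple j) * cs.simple i) * w := by rw [e]; group
      _ = cs.simple j * (cs.simple i * (cs.simple j * (cs.simple i * w))) := by group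
  show cs.length (cs.simple i * (cs.simple j * w)) < cs.length (cs.simple j * w)
  rw [hv]
  have b1 := cs.length_mul_le (cs.simple j) (cs.simple i * (cs.simple j * (cs.simple i * w)))
  have b2 := cs.length_mul_le (cs.simple i) (cs.simple j * (cs.simple i * w))
  rw [cs.length_simple] at b1 b2
  omega

theorem key_backward {i j : B} (h3 : M i j = 3)
    {w : W} (hi : cs.IsLeftDescent w i) (hj : ¬ cs.IsLeftDescent w j)
    (h : cs.IsLeftDescent (cs.simple j * w) i) : cs.IsLeftDescent (cs.simple i * w) j := by
  have hbraid := braid_of_three cs i j h3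
  have h1 := cs.isLeftDescent_iff.mp hi
  have h2 := cs.not_isLeftDescent_iff.mp hj
  obtain ⟨α, hlen, hα⟩ := cs.exists_reduced_word (cs.simple i * w)
  replace hlen : α.length = cs.length (cs.simple i * w) := by rw [hα]; exact hlen.symm
  have hπ : cs.wordProd (j :: i :: α) = cs.simple j * w := by
    rw [cs.wordProd_cons, cs.wordProd_cons, ← hα, cs.simple_mul_simple_cancel_left]
  have hred : cs.IsReduced (j :: i :: α) := by
    unfold CoxeterSystem.IsReduced
    rw [hπ]
    simp only [List.length_cons]
    omega
  have hdesc : cs.IsLeftDescent (cs.wordProd (j :: i :: α)) i := by rw [hπ]; exact h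
  obtain ⟨k, hk, heq⟩ := exchange cs (j :: i :: α) hred i hdesc
  rw [hπ] at heq
  cases k with
  | zero =>
    rw [List.eraseIdx_cons_zero, cs.wordProd_cons, ← hα, cs.simple_mul_simple_cancel_left] at heq
    exfalso
    have hc : cs.simple j * w = cs.simple i * w := by
      have h6 := congrArg (fun z => cs.simple i * z) heq
      simpa only [cs.simple_mul_simple_cancel_left] using h6
    have hlen2 : cs.length (cs.simple j * w) = cs.length (cs.simple i * w) := by rw [hc]
    omega
  | succ k1 =>
    cases k1 with
    | zero =>
      rw [List.eraseIdx_cons_succ, List.eraseIdx_cons_zero, cs.wordProd_cons, ← hα] at heq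
      exfalso
      have hcomm : cs.simple i * cs.simple j = cs.simple j * cs.simple i := by
        have h4 : (cs.simple i * cs.simple j) * w = (cs.simple j * cs.simple i) * w := by
          rw [mul_assoc, mul_assoc]; exact heq
        exact mul_right_cancel h4
      have hji : cs.simple j = cs.simple i := by
        have e1 : cs.simple i * cs.simple j * cs.simple i = cs.simple j := by
          rw [hcomm, mul_assoc, cs.simple_mul_simple_self, mul_one]
        have e2 : cs.simple i * cs.simple j * cs.simple i = cs.simple i := by
          rw [hbraid, mul_assoc, hcomm, ← mul_assoc, cs.simple_mul_simple_self, one_mul]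
        exact e1.symm.trans e2
      have hlen2 : cs.length (cs.simple j * w) = cs.length (cs.simple i * w) := by rw [hji]
      omega
    | succ k2 =>
      rw [List.eraseIdx_cons_succ, List.eraseIdx_cons_succ, cs.wordProd_cons,
        cs.wordProd_cons] at heq
      have hβ : cs.wordProd (α.eraseIdx k2) = cs.simple j * (cs.simple i * w) := by
        have h6 := congrArg (fun z => cs.simple i * (cs.simple j * z)) heq
        simp only [cs.simple_mul_simple_cancel_left] at h6
        rw [← h6]
        have e : cs.simple i * cs.simple j * cs.simple i * cs.simple j
            = cs.simple j * cs.simple i := by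
          rw [hbraid]
          exact cs.simple_mul_simple_cancel_right j
        calc cs.simple i * (cs.simple j * (cs.simple i * (cs.simple j * w)))
            = (cs.simple i * cs.simple j * cs.simple i * cs.simple j) * w := by group
          _ = (cs.simple j * cs.simple i) * w := by rw [e]
          _ = cs.simple j * (cs.simple i * w) := by group
      have hk2 : k2 < α.length := by
        simp only [List.length_cons] at hk
        omega
      have hlenβ : cs.length (cs.wordProd (α.eraseIdx k2)) ≤ α.length - 1 := by
        have hle := cs.length_wordProd_le (α.eraseIdx k2)
        have hlen3 := List.length_eraseIdx_add_one hk2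
        omega
      show cs.length (cs.simple j * (cs.simple i * w)) < cs.length (cs.simple i * w)
      rw [← hβ]
      omega

theorem aux {i j : B} (h3 : M i j = 3) (D : W → Prop)
    (hD : ∀ w, D w ↔ Xor' (cs.IsLeftDescent w i) (cs.IsLeftDescent w j))
    {w : W} (hi : cs.IsLeftDescent w i) (hj : ¬ cs.IsLeftDescent w j) :
    ∃! x : W, (x = cs.simple i * w ∨ x = cs.simple j * w) ∧ D x := by
  have hbraid := braid_of_three cs i j h3
  have hnii : ¬ cs.IsLeftDescent (cs.simple i * w) i :=
    (cs.isLeftDescent_iff_not_isLeftDescent_mul).mp hi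
  have hjj : cs.IsLeftDescent (cs.simple j * w) j := by
    by_contra hcon
    exact hj ((cs.isLeftDescent_iff_not_isLeftDescent_mul).mpr hcon)
  have hDsi : D (cs.simple i * w) ↔ cs.IsLeftDescent (cs.simple i * w) j := by
    rw [hD]; unfold Xor'; unfold Xor; tauto
  have hDsj : D (cs.simple j * w) ↔ ¬ cs.IsLeftDescent (cs.simple j * w) i := by
    rw [hD]; unfold Xor'; unfold Xor; tauto
  by_cases hc : cs.IsLeftDescent (cs.simple i * w) j
  · refine ⟨cs.simple i * w, ⟨Or.inl rfl, hDsi.mpr hc⟩, ?_⟩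
    rintro x ⟨hor, hx⟩
    rcases hor with rfl | rfl
    · rfl
    · exact absurd (key_forward cs hbraid hi hj hc) (hDsj.mp hx)
  · refine ⟨cs.simple j * w,
      ⟨Or.inr rfl, hDsj.mpr (fun hdes => hc (key_backward cs h3 hi hj hdes))⟩, ?_⟩
    rintro x ⟨hor, hx⟩
    rcases hor with rfl | rfl
    · exact absurd (hDsi.mp hx) hc
    · rfl

end StarAux

/-- Let `s = simple i`, `t = simple j` with `st` of order `3` in a Coxeter group.
Let `D_L(s,t)` be the set of `w` such that exactly one of `s, t` is a left descent of `w`.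
Then for every `w ∈ D_L(s,t)`, exactly one of the two elements `sw, tw` lies in `D_L(s,t)`
(so the left star operation `w ↦ *w` is well defined), and the resulting map is an
involution of `D_L(s,t)`. -/
theorem left_star_operation {B W : Type*} [Group W] {M : CoxeterMatrix B}
    (cs : CoxeterSystem M W) (i j : B) (hij : M i j = 3)
    (D : W → Prop)
    (hD : ∀ w, D w ↔ Xor' (cs.IsLeftDescent w i) (cs.IsLeftDescent w j)) :
    ∀ w, D w →
      (∃! x : W, (x = cs.simple i * w ∨ x = cs.simple j * w) ∧ D x) ∧
      (∀ x : W, (x = cs.simple i * w ∨ x = cs.simple j * w) → D x →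
        ((w = cs.simple i * x ∨ w = cs.simple j * x) ∧ D w)) := by
  intro w hw
  constructor
  · rcases (hD w).mp hw with ⟨hi, hj⟩ | ⟨hj, hi⟩
    · exact StarAux.aux cs hij D hD hi hj
    · have h3' : M j i = 3 := by rw [M.symmetric]; exact hij
      have hD' : ∀ v, D v ↔ Xor' (cs.IsLeftDescent v j) (cs.IsLeftDescent v i) :=
        fun v => (hD v).trans (iff_of_eq (xor_comm _ _))
      obtain ⟨x, ⟨hor, hx⟩, hu⟩ := StarAux.aux cs h3' D hD' hj hi
      exact ⟨x, ⟨hor.symm, hx⟩, fun y hy => hu y ⟨hy.1.symm, hy.2⟩⟩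
  · rintro x (rfl | rfl) hx
    · exact ⟨Or.inl (cs.simple_mul_simple_cancel_left i).symm, hw⟩
    · exact ⟨Or.inr (cs.simple_mul_simple_cancel_left j).symm, hw⟩
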